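/- arXiv:1302.0587 — 2 statements merged into one kernel-verified Lean document; each statement's English description precedes it below -/
import Mathlib

section
/- For every n ≥ 0, the set { |d(p(n), −q'_ε(n))| : ε ranges over all sequences ℕ → {0,1} } has exactly ⌊(n+1)/2⌋ + 1 elements, where |·| denotes absolute value and ⌊·⌋ the floor. -/
/-- For integers `p > q > 0`, the diagonal element `d(p, q)` of the linking matrix of the
dihedral covering link of the 2-bridge knot `b(p,q)`:
`d(p, q) = −∑_{k=1}^{p−1} (−1)^{⌊q·k/p⌋}`. -/
noncomputable def diagElem (p q : ℤ) : ℤ :=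
  -∑ k ∈ Finset.Icc (1 : ℤ) (p - 1), ((⌊(q : ℚ) * (k : ℚ) / (p : ℚ)⌋).negOnePow : ℤ)

/-- `p(0) = 3`, `p(n+1) = p(n)·(4·p(n)² − 1)`. -/
def pSeq : ℕ → ℤ
  | 0 => 3
  | n + 1 => pSeq n * (4 * (pSeq n) ^ 2 - 1)

/-- `q'_ε(0) = −1`, `q'_ε(n+1) = q'_ε(n)·(4·p(n)² − 1) + 2·(−1)^{ε(n)+1}·p(n)`. -/
def q'Seq (ε : ℕ → ℕ) : ℕ → ℤ
  | 0 => -1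
  | n + 1 => q'Seq ε n * (4 * (pSeq n) ^ 2 - 1) + 2 * (-1 : ℤ) ^ (ε n + 1) * pSeq n

/-
Put `S(p, q) = ∑_{k=0}^{p-1} (-1)^⌊qk/p⌋`, so that `d(p, q) = 1 - S(p, q)`.

For odd `Q` and `m = 4p² - 1`, write `k = a p + r` with `0 ≤ a < m`, `0 ≤ r < p`. Then
`⌊(Q m + 2p) k / (p m)⌋ ≡ a + ⌊(a + 2Qr + δ) / (2p)⌋ (mod 2)`, where `δ ∈ {0, 1}` switches on
at `a = m - 4pr`. In `a`, the sign `(-1)^(a + ⌊(a + c)/(2p)⌋)` is antiperiodic with antiperiod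
`2p`, and both pieces of `[0, m)` have lengths that are multiples of `4p` up to one term, so the
fibre over `r` sums to `(-1)^⌊(Qr - 1)/p⌋`. When `Q` is prime to `p` this gives
`S(pm, Qm + 2p) = S(p, Q) - 2`, and also `S(p, -Q) = 2 - S(p, Q)`, i.e. `d(p, -Q) = -d(p, Q)`.

Following the recursion, `d(p(n), -q'_ε(n)) = 2 ∑_{j<n} (-1)^ε(j) - 2`, which ranges over
`2(n - 2b) - 2` for `0 ≤ b ≤ n`; these have `⌊(n+1)/2⌋ + 1` distinct absolute values.
-/

open Finset Function

theorem Int.sum_Ico_consecutive {M : Type*} [AddCommMonoid M] (f : ℤ → M) {a b c : ℤ}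
    (hab : a ≤ b) (hbc : b ≤ c) :
    ∑ k ∈ Ico a b, f k + ∑ k ∈ Ico b c, f k = ∑ k ∈ Ico a c, f k := by
  rw [← sum_union (Ico_disjoint_Ico_consecutive a b c), Ico_union_Ico_eq_Ico hab hbc]

theorem Int.sum_Ico_mul {M : Type*} [AddCommMonoid M] (f : ℤ → M) {A B : ℤ} (hB : 0 < B) :
    ∑ k ∈ Ico 0 (A * B), f k = ∑ r ∈ Ico 0 B, ∑ a ∈ Ico 0 A, f (a * B + r) := by
  refine Eq.trans ?_ (sum_product_right (Ico 0 A) (Ico 0 B) fun x => f (x.1 * B + x.2))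
  refine sum_nbij' (fun k => (k / B, k % B)) (fun x => x.1 * B + x.2) ?_ ?_ ?_ ?_ ?_
  · intro k hk
    simp only [mem_Ico, mem_product] at hk ⊢
    exact ⟨⟨Int.ediv_nonneg hk.1 hB.le, (Int.ediv_lt_iff_lt_mul hB).2 hk.2⟩,
      Int.emod_nonneg _ hB.ne', Int.emod_lt_of_pos _ hB⟩
  · rintro ⟨a, r⟩ h
    simp only [mem_Ico, mem_product] at h ⊢
    constructor <;> nlinarith
  · intro k _
    exact Int.ediv_mul_add_emod k B
  · rintro ⟨a, r⟩ h
    simp only [mem_Ico, mem_product] at h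
    rw [Prod.mk.injEq, add_comm, Int.add_mul_ediv_right _ _ hB.ne',
      Int.ediv_eq_zero_of_lt h.2.1 h.2.2, Int.add_mul_emod_self_right,
      Int.emod_eq_of_lt h.2.1 h.2.2, zero_add]
    exact ⟨rfl, rfl⟩
  · intro k _
    exact congrArg f (Int.ediv_mul_add_emod k B).symm

theorem Function.Antiperiodic.sum_Ico_eq_zero {M : Type*} [AddCommGroup M] {f : ℤ → M} {c : ℤ}
    (hf : Antiperiodic f c) (hc : 0 ≤ c) (s : ℤ) {K : ℤ} (hK : 0 ≤ K) :
    ∑ k ∈ Ico s (s + 2 * c * K), f k = 0 := by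
  lift K to ℕ using hK
  induction K generalizing s with
  | zero => simp
  | succ K ih =>
    have hperiod : ∑ k ∈ Ico s (s + 2 * c), f k = 0 := by
      rw [← Int.sum_Ico_consecutive f (b := s + c) (by omega) (by omega),
        show s + 2 * c = s + c + c by ring, ← sum_Ico_add']
      simp [hf _]
    push_cast
    rw [← Int.sum_Ico_consecutive f (b := s + 2 * c) (by omega) (by nlinarith), hperiod, zero_add]
    convert ih (s + 2 * c) using 3
    ring

theorem Int.negOnePow_odd_mul_add {Q : ℤ} (hQ : Odd Q) (a y : ℤ) :
    (Q * a + y).negOnePow = (a + y).negOnePow := by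
  rw [Int.negOnePow_eq_iff]
  obtain ⟨t, rfl⟩ := hQ
  exact ⟨t * a, by ring⟩

theorem Int.antiperiodic_negOnePow_add_ediv {p : ℤ} (hp : p ≠ 0) (c : ℤ) :
    Antiperiodic (fun a : ℤ => ((a + (a + c) / (2 * p)).negOnePow : ℤ)) (2 * p) := by
  intro a
  dsimp only
  rw [show a + 2 * p + c = a + c + 2 * p * 1 by ring, Int.add_mul_ediv_left _ _ (by omega),
    show a + 2 * p + ((a + c) / (2 * p) + 1) = a + (a + c) / (2 * p) + 1 + 2 * p by ring,
    Int.negOnePow_add, Int.negOnePow_succ, Int.negOnePow_two_mul, Units.val_mul, Units.val_one,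
    mul_one, Units.val_neg]

theorem Int.two_mul_add_one_ediv_two_mul (x p : ℤ) : (2 * x + 1) / (2 * p) = x / p := by
  rw [← Int.ediv_ediv_of_nonneg (by norm_num), show (2 * x + 1) / 2 = x by omega]

theorem Int.sub_one_ediv_of_not_dvd {p x : ℤ} (hp : 0 < p) (h : ¬p ∣ x) :
    (x - 1) / p = x / p := by
  have hne : x % p ≠ 0 := fun h0 => h (Int.dvd_of_emod_eq_zero h0)
  have hnonneg := Int.emod_nonneg x hp.ne'
  have hlt := Int.emod_lt_of_pos x hp
  have hx := Int.ediv_mul_add_emod x p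
  rw [Int.ediv_eq_iff_of_pos hp]
  generalize x % p = t at *
  omega

theorem Int.not_dvd_mul_of_isCoprime {p Q r : ℤ} (h : IsCoprime p Q) (hr : 0 < r) (hr' : r < p) :
    ¬p ∣ Q * r :=
  fun hd => (Int.le_of_dvd hr (h.dvd_of_dvd_mul_left hd)).not_gt hr'

theorem Int.floor_intCast_div_intCast {p : ℤ} (hp : 0 < p) (x : ℤ) :
    ⌊(x : ℚ) / p⌋ = x / p := by
  lift p to ℕ using hp.le
  exact_mod_cast Rat.floor_intCast_div_natCast x p

-- `(Q m + 2p)(a p + r) / (p m) = Q a + (a + 2Qr) / (2p) + (a + 4pr) / (2pm)`, and the last summand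
-- lies in `[0, 1/p)`; it is at least `1/(2p)` exactly when `a + 4pr ≥ m`.
theorem step_mul_ediv {p : ℤ} (hp : 0 < p) (Q : ℤ) {a r : ℤ} (ha : 0 ≤ a)
    (ha' : a < 4 * p ^ 2 - 1) (hr : 0 ≤ r) (hr' : r < p) :
    (Q * (4 * p ^ 2 - 1) + 2 * p) * (a * p + r) / (p * (4 * p ^ 2 - 1)) =
      Q * a + (a + (2 * Q * r + if 4 * p ^ 2 - 1 - 4 * p * r ≤ a then 1 else 0)) / (2 * p) := by
  set m := 4 * p ^ 2 - 1 with hm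
  set δ : ℤ := if m - 4 * p * r ≤ a then 1 else 0 with hδ
  have hm0 : 0 < m := by nlinarith
  obtain ⟨hv, hv'⟩ := (Int.ediv_eq_iff_of_pos (by omega : 0 < 2 * p)).1
    (rfl : (a + (2 * Q * r + δ)) / (2 * p) = _)
  set v := (a + (2 * Q * r + δ)) / (2 * p)
  have hX : 2 * ((Q * m + 2 * p) * (a * p + r) - Q * a * (p * m)) =
      m * (a + 2 * Q * r) + (a + 4 * p * r) := by
    linear_combination (-a) * hm
  have hvm : v * (2 * p) * m ≤ (a + (2 * Q * r + δ)) * m := mul_le_mul_of_nonneg_right hv hm0.le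
  have hvm' : (a + (2 * Q * r + δ) + 1) * m ≤ (v * (2 * p) + 2 * p) * m :=
    mul_le_mul_of_nonneg_right (by omega) hm0.le
  rw [Int.ediv_eq_iff_of_pos (by positivity)]
  by_cases hc : m - 4 * p * r ≤ a
  · simp only [hδ, if_pos hc] at hvm hvm'
    constructor <;> nlinarith
  · simp only [hδ, if_neg hc] at hvm hvm'
    constructor <;> nlinarith

theorem sum_negOnePow_step_column {p Q : ℤ} (hp : 0 < p) (hQ : Odd Q) {r : ℤ} (hr : 0 ≤ r)
    (hr' : r < p) :
    ∑ a ∈ Ico 0 (4 * p ^ 2 - 1),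
        (((Q * (4 * p ^ 2 - 1) + 2 * p) * (a * p + r) / (p * (4 * p ^ 2 - 1))).negOnePow : ℤ) =
      ((Q * r - 1) / p).negOnePow := by
  set m := 4 * p ^ 2 - 1 with hm
  set W := m - 4 * p * r with hW
  set σ : ℤ → ℤ → ℤ := fun c a => ((a + (a + c) / (2 * p)).negOnePow : ℤ)
  have hW0 : 0 ≤ W := by nlinarith
  have hWm : W ≤ m := by nlinarith
  have hterm (a : ℤ) (ha : a ∈ Ico 0 m) :
      (((Q * m + 2 * p) * (a * p + r) / (p * m)).negOnePow : ℤ) =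
        σ (2 * Q * r + if W ≤ a then 1 else 0) a := by
    rw [mem_Ico] at ha
    rw [step_mul_ediv hp Q ha.1 ha.2 hr hr', Int.negOnePow_odd_mul_add hQ]
  have hlow :
      ∑ a ∈ Ico 0 W, σ (2 * Q * r + if W ≤ a then 1 else 0) a = -σ (2 * Q * r) W := by
    have hzero : ∑ a ∈ Ico 0 (W + 1), σ (2 * Q * r) a = 0 := by
      convert (Int.antiperiodic_negOnePow_add_ediv hp.ne' (2 * Q * r)).sum_Ico_eq_zero
        (by omega) 0 (K := p - r) (by omega) using 3
      rw [hW, hm]; ring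
    rw [← insert_Ico_right_eq_Ico_add_one hW0, sum_insert (by simp)] at hzero
    rw [sum_congr rfl fun a ha => by rw [if_neg (mem_Ico.1 ha).2.not_ge, add_zero]]
    linarith
  have hhigh : ∑ a ∈ Ico W m, σ (2 * Q * r + if W ≤ a then 1 else 0) a = 0 := by
    rw [sum_congr rfl fun a ha => by rw [if_pos (mem_Ico.1 ha).1]]
    convert (Int.antiperiodic_negOnePow_add_ediv hp.ne' (2 * Q * r + 1)).sum_Ico_eq_zero
      (by omega) W (K := r) hr using 3
    rw [hW]; ring
  have hlast : σ (2 * Q * r) W = -((Q * r - 1) / p).negOnePow := by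
    have hnum : W + 2 * Q * r = 2 * (Q * r - 1) + 1 + 2 * p * (2 * p - 2 * r) := by
      rw [hW, hm]; ring
    have hexp : W + ((Q * r - 1) / p + (2 * p - 2 * r)) =
        (Q * r - 1) / p + 1 + 2 * (2 * p ^ 2 - 2 * p * r + p - r - 1) := by
      rw [hW, hm]; ring
    change ((W + (W + 2 * Q * r) / (2 * p)).negOnePow : ℤ) = _
    rw [hnum, Int.add_mul_ediv_left _ _ (by omega), Int.two_mul_add_one_ediv_two_mul,
      hexp, Int.negOnePow_add, Int.negOnePow_succ, Int.negOnePow_two_mul, Units.val_mul,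
      Units.val_one, mul_one, Units.val_neg]
  rw [sum_congr rfl hterm, ← Int.sum_Ico_consecutive _ hW0 hWm, hlow, hhigh, hlast]
  ring

noncomputable def signSum (p q : ℤ) : ℤ := ∑ k ∈ Ico 0 p, ((q * k / p).negOnePow : ℤ)

theorem signSum_eq_one_add {p : ℤ} (hp : 0 < p) (q : ℤ) :
    signSum p q = 1 + ∑ k ∈ Ico 1 p, ((q * k / p).negOnePow : ℤ) := by
  rw [signSum, ← insert_Ico_add_one_left_eq_Ico hp, sum_insert (by simp), mul_zero,
    Int.zero_ediv, Int.negOnePow_zero, Units.val_one, zero_add]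

theorem diagElem_eq_one_sub_signSum {p : ℤ} (hp : 0 < p) (q : ℤ) :
    diagElem p q = 1 - signSum p q := by
  rw [diagElem, signSum_eq_one_add hp, Icc_sub_one_right_eq_Ico]
  simp only [← Int.cast_mul, Int.floor_intCast_div_intCast hp]
  ring

theorem signSum_neg {p q : ℤ} (hp : 0 < p) (h : IsCoprime p q) :
    signSum p (-q) = 2 - signSum p q := by
  have hterm (k : ℤ) (hk : k ∈ Ico 1 p) :
      ((-q * k / p).negOnePow : ℤ) = -(q * k / p).negOnePow := by
    rw [mem_Ico] at hk
    rw [neg_mul, Int.neg_ediv, if_neg (Int.not_dvd_mul_of_isCoprime h (by omega) hk.2),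
      Int.sign_eq_one_of_pos hp, sub_eq_add_neg, Int.negOnePow_add, Int.negOnePow_neg,
      Int.negOnePow_neg, Int.negOnePow_one, Units.val_mul, Units.val_neg, Units.val_one,
      mul_neg_one]
  rw [signSum_eq_one_add hp, signSum_eq_one_add hp, sum_congr rfl hterm, sum_neg_distrib]
  ring

theorem diagElem_neg {p q : ℤ} (hp : 0 < p) (h : IsCoprime p q) :
    diagElem p (-q) = -diagElem p q := by
  rw [diagElem_eq_one_sub_signSum hp, diagElem_eq_one_sub_signSum hp, signSum_neg hp h]
  ring

theorem signSum_step {p Q : ℤ} (hp : 0 < p) (hQ : Odd Q) :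
    signSum (p * (4 * p ^ 2 - 1)) (Q * (4 * p ^ 2 - 1) + 2 * p) =
      ∑ r ∈ Ico 0 p, (((Q * r - 1) / p).negOnePow : ℤ) := by
  rw [signSum, mul_comm p (4 * p ^ 2 - 1), Int.sum_Ico_mul _ hp]
  refine sum_congr rfl fun r hr => ?_
  rw [mem_Ico] at hr
  rw [← sum_negOnePow_step_column hp hQ hr.1 hr.2, mul_comm (4 * p ^ 2 - 1) p]

theorem sum_negOnePow_sub_one_ediv {p Q : ℤ} (hp : 0 < p) (h : IsCoprime p Q) :
    ∑ r ∈ Ico 0 p, (((Q * r - 1) / p).negOnePow : ℤ) = signSum p Q - 2 := by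
  have hzero : (Q * 0 - 1) / p = -1 := by
    rw [Int.ediv_eq_iff_of_pos hp]
    omega
  have hterm (r : ℤ) (hr : r ∈ Ico 1 p) : (Q * r - 1) / p = Q * r / p := by
    rw [mem_Ico] at hr
    exact Int.sub_one_ediv_of_not_dvd hp (Int.not_dvd_mul_of_isCoprime h (by omega) hr.2)
  rw [← insert_Ico_add_one_left_eq_Ico hp, sum_insert (by simp), zero_add, signSum_eq_one_add hp,
    hzero,
    sum_congr rfl fun r hr => by rw [hterm r hr], Int.negOnePow_neg, Int.negOnePow_one,
    Units.val_neg, Units.val_one]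
  ring

theorem diagElem_step {p Q : ℤ} (hp : 0 < p) (hQ : Odd Q) (h : IsCoprime p Q) :
    diagElem (p * (4 * p ^ 2 - 1)) (Q * (4 * p ^ 2 - 1) + 2 * p) = diagElem p Q + 2 := by
  rw [diagElem_eq_one_sub_signSum (by nlinarith), diagElem_eq_one_sub_signSum hp,
    signSum_step hp hQ, sum_negOnePow_sub_one_ediv hp h]
  ring

theorem isCoprime_step {p Q : ℤ} (h : IsCoprime p Q) (k : ℕ) :
    IsCoprime (p * (4 * p ^ 2 - 1)) (Q * (4 * p ^ 2 - 1) + 2 * (-1) ^ k * p) := by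
  have hpm : IsCoprime p (4 * p ^ 2 - 1) := ⟨4 * p, -1, by ring⟩
  have hm2 : IsCoprime (4 * p ^ 2 - 1) 2 := ⟨-1, 2 * p ^ 2, by ring⟩
  have hmp : IsCoprime (4 * p ^ 2 - 1) p := ⟨-1, 4 * p, by ring⟩
  have hmsign : IsCoprime (4 * p ^ 2 - 1) ((-1) ^ k) := isCoprime_one_right.neg_right.pow_right
  refine IsCoprime.mul_left ?_ ?_
  · rw [mul_comm _ p]
    exact (h.mul_right hpm).add_mul_left_right _
  · rw [add_comm]
    exact ((hm2.mul_right hmsign).mul_right hmp).add_mul_right_right Q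

theorem pSeq_pos (n : ℕ) : 0 < pSeq n := by
  induction n with
  | zero => norm_num [pSeq]
  | succ n ih => rw [pSeq]; nlinarith

theorem odd_q'Seq (ε : ℕ → ℕ) (n : ℕ) : Odd (q'Seq ε n) := by
  induction n with
  | zero => exact ⟨-1, rfl⟩
  | succ n ih =>
    rw [q'Seq, mul_assoc 2]
    exact (ih.mul ⟨2 * pSeq n ^ 2 - 1, by ring⟩).add_even (even_two_mul _)

theorem isCoprime_pSeq_q'Seq (ε : ℕ → ℕ) (n : ℕ) : IsCoprime (pSeq n) (q'Seq ε n) := by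
  induction n with
  | zero => exact ⟨0, -1, by norm_num [pSeq, q'Seq]⟩
  | succ n ih => exact isCoprime_step ih (ε n + 1)

theorem diagElem_pSeq_neg_q'Seq (ε : ℕ → ℕ) (n : ℕ) :
    diagElem (pSeq n) (-q'Seq ε n) = 2 * ∑ j ∈ range n, (-1 : ℤ) ^ ε j - 2 := by
  induction n with
  | zero =>
    rw [diagElem_eq_one_sub_signSum (pSeq_pos 0), signSum,
      show Ico (0 : ℤ) (pSeq 0) = {0, 1, 2} by rfl]
    simp [q'Seq, pSeq]
  | succ n ih =>
    have hp := pSeq_pos n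
    have hQ := odd_q'Seq ε n
    have hcop := isCoprime_pSeq_q'Seq ε n
    have hcop' := isCoprime_pSeq_q'Seq ε (n + 1)
    rw [sum_range_succ]
    rw [pSeq, q'Seq] at hcop' ⊢
    rcases neg_one_pow_eq_or ℤ (ε n) with hε | hε <;>
      rw [pow_succ (-1 : ℤ) (ε n), hε] at hcop' ⊢
    · rw [show -(q'Seq ε n * (4 * pSeq n ^ 2 - 1) + 2 * (1 * -1) * pSeq n) =
        -q'Seq ε n * (4 * pSeq n ^ 2 - 1) + 2 * pSeq n by ring,
        diagElem_step hp hQ.neg hcop.neg_right, ih]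
      ring
    · rw [show (2 : ℤ) * (-1 * -1) = 2 by norm_num] at hcop' ⊢
      rw [diagElem_neg (by nlinarith) hcop', diagElem_step hp hQ hcop]
      rw [diagElem_neg hp hcop] at ih
      linarith

theorem sum_neg_one_pow_eq_sub {ε : ℕ → ℕ} (hε : ∀ j, ε j = 0 ∨ ε j = 1) (n : ℕ) :
    ∑ j ∈ range n, (-1 : ℤ) ^ ε j = n - 2 * ∑ j ∈ range n, ε j := by
  have hj (j : ℕ) : (-1 : ℤ) ^ ε j = 1 - 2 * ε j := by rcases hε j with h | h <;> simp [h]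
  simp [hj, sum_sub_distrib, mul_sum]

theorem image_sum_neg_one_pow {α : Type*} (g : ℤ → α) (n : ℕ) :
    {x | ∃ ε : ℕ → ℕ, (∀ j, ε j = 0 ∨ ε j = 1) ∧
        x = g (∑ j ∈ range n, (-1 : ℤ) ^ ε j)} =
      (fun b : ℕ => g (n - 2 * b)) '' Set.Iic n := by
  ext x
  constructor
  · rintro ⟨ε, hε, rfl⟩
    refine ⟨∑ j ∈ range n, ε j, ?_, by rw [sum_neg_one_pow_eq_sub hε]⟩
    calc ∑ j ∈ range n, ε j ≤ ∑ _j ∈ range n, 1 :=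
          sum_le_sum fun j _ => by rcases hε j with h | h <;> omega
      _ = n := by rw [sum_const, card_range, smul_eq_mul, mul_one]
  · rintro ⟨b, hb, rfl⟩
    have hε (j : ℕ) : (if j < b then 1 else 0) = 0 ∨ (if j < b then 1 else 0) = 1 := by
      split_ifs <;> simp
    have hfilter : (range n).filter (· < b) = range b := by
      ext j
      rw [Set.mem_Iic] at hb
      simp only [mem_filter, mem_range]
      exact ⟨And.right, fun h => ⟨by omega, h⟩⟩
    refine ⟨fun j => if j < b then 1 else 0, hε, ?_⟩
    rw [sum_neg_one_pow_eq_sub hε, sum_boole, hfilter, card_range, Nat.cast_id]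

theorem ncard_image_abs (n : ℕ) :
    ((fun b : ℕ => |2 * ((n : ℤ) - 2 * b) - 2|) '' Set.Iic n).ncard = (n + 1) / 2 + 1 := by
  have himage : (fun b : ℕ => |2 * ((n : ℤ) - 2 * b) - 2|) '' Set.Iic n =
      (fun i : ℕ => 2 * ((n : ℤ) + 1 - 2 * i)) '' Set.Iic ((n + 1) / 2) := by
    ext x
    simp only [Set.mem_image, Set.mem_Iic]
    constructor
    · rintro ⟨b, hb, rfl⟩
      rcases le_or_gt (2 * b + 1) n with h | h
      · exact ⟨b + 1, by omega, by rw [abs_of_nonneg (by omega)]; push_cast; ring⟩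
      · exact ⟨n - b, by omega, by rw [abs_of_neg (by omega), Nat.cast_sub hb]; ring⟩
    · rintro ⟨i, hi, rfl⟩
      rcases Nat.eq_zero_or_pos i with rfl | h
      · exact ⟨n, le_rfl, by rw [abs_of_neg (by omega)]; push_cast; ring⟩
      · exact ⟨i - 1, by omega, by rw [abs_of_nonneg (by omega), Nat.cast_sub h]; ring⟩
  rw [himage, Set.ncard_image_of_injective _ fun i j h => by simpa using h, Set.ncard_Iic_nat]

/-- For every `n ≥ 0`, the set `{ |d(p(n), −q'_ε(n))| : ε : ℕ → {0,1} }` has exactly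
`⌊(n+1)/2⌋ + 1` elements. -/
theorem card_abs_diagElem (n : ℕ) :
    Set.ncard {x : ℤ | ∃ ε : ℕ → ℕ, (∀ j, ε j = 0 ∨ ε j = 1) ∧
        x = |diagElem (pSeq n) (-(q'Seq ε n))|} = (n + 1) / 2 + 1 := by
  simp_rw [diagElem_pSeq_neg_q'Seq]
  rw [image_sum_neg_one_pow (fun s => |2 * s - 2|), ncard_image_abs]
end

section
/- Let p and q be relatively prime odd integers with p ≥ 3 and 0 < q < p, and set P = 4p³ − p and Q = (4p² − 1)q + 2p. Then the number of integers k with 0 < k < P such that ⌊q·k/p⌋ is even and ⌊Q·k/P⌋ is odd exceeds by exactly one the number of integers k with 0 < k < P such that ⌊q·k/p⌋ is odd and ⌊Q·k/P⌋ is even. -/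
/-!
Write `ε n = (-1)ⁿ`. The difference of the two counts is half of
`∑_{0<k<P} (ε⌊qk/p⌋ - ε⌊Qk/P⌋)`, so it suffices that this sum is `2`. With `N = 4p² - 1`, so that
`P = pN`, write `k = i + pj` with `0 ≤ i < p`, `0 ≤ j < N`. Then `⌊qk/p⌋ = ⌊qi/p⌋ + qj` and
`⌊Qk/P⌋ = ⌊qk/p⌋ + ⌊(Na + 2pi + 2p²j)/P⌋` with `a = qi mod p`. As `q` and `N` are odd, the row
`i` contributes `ε⌊qi/p⌋ (1 - Sᵢ)` with `Sᵢ = ∑_j ε j · ε⌊(Na + 2pi + 2p²j)/P⌋`.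
Since `(2p)² ≡ 1 (mod N)`, the substitution `j ≡ 2ps (mod N)` turns `Sᵢ` into
`∑_{s<N} ε(⌊s/2p⌋ + s) · (±1)`, where the sign changes from `+` to `-` at the even threshold
`s = 4p(p - a) - 2i`. So the terms `s = 2v` and `s = 2v + 1` cancel, and only `s = N - 1` is left:
`Sᵢ = -1` if `i = 0` and `Sᵢ = 1` otherwise (by coprimality, `a = 0` only for `i = 0`).
Only the row `i = 0` survives, and it contributes `2`.
-/

open Finset

local notation "ε" n:max => ((Int.negOnePow n : ℤˣ) : ℤ)

theorem floor_intCast_div_intCast {a b : ℤ} (hb : 0 < b) : ⌊(a : ℚ) / b⌋ = a / b := by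
  lift b to ℕ using hb.le
  exact_mod_cast Rat.floor_intCast_div_natCast a b

theorem Int.negOnePow_mul_of_odd {c : ℤ} (hc : Odd c) (n : ℤ) :
    (c * n).negOnePow = n.negOnePow := by
  rw [Int.negOnePow_eq_iff, show c * n - n = (c - 1) * n by ring]
  exact (hc.sub_odd odd_one).mul_right n

theorem sum_Ico_mul_eq_sum_sum {M : Type*} [AddCommMonoid M] (f : ℤ → M) {p : ℤ} (hp : 0 < p)
    (n : ℤ) : ∑ k ∈ Ico 0 (p * n), f k = ∑ i ∈ Ico 0 p, ∑ j ∈ Ico 0 n, f (i + p * j) := by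
  rw [← sum_product']
  refine (sum_nbij' (fun x => x.1 + p * x.2) (fun k => (k % p, k / p)) ?_ ?_ ?_ ?_ ?_).symm
  · rintro ⟨i, j⟩ h
    simp only [mem_product, mem_Ico] at h
    rw [mem_Ico]
    constructor <;> nlinarith
  · intro k h
    simp only [mem_Ico, mem_product] at h ⊢
    refine ⟨⟨Int.emod_nonneg _ hp.ne', Int.emod_lt_of_pos _ hp⟩, Int.ediv_nonneg h.1 hp.le, ?_⟩
    rw [Int.ediv_lt_iff_lt_mul hp]
    linarith
  · rintro ⟨i, j⟩ h
    simp only [mem_product, mem_Ico] at h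
    simp only [Prod.mk.injEq]
    rw [Int.add_mul_emod_self_left, Int.emod_eq_of_lt h.1.1 h.1.2,
      Int.add_mul_ediv_left _ _ hp.ne', Int.ediv_eq_zero_of_lt h.1.1 h.1.2, zero_add]
    exact ⟨rfl, rfl⟩
  · intro k _
    exact Int.emod_add_mul_ediv k p
  · intro _ _
    rfl

theorem sum_Ico_two_mul {M : Type*} [AddCommMonoid M] (f : ℤ → M) (n : ℤ) :
    ∑ k ∈ Ico 0 (2 * n), f k = ∑ j ∈ Ico 0 n, (f (2 * j) + f (2 * j + 1)) := by
  rw [sum_Ico_mul_eq_sum_sum f two_pos, show Ico (0 : ℤ) 2 = {0, 1} by rfl,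
    sum_pair zero_ne_one, ← sum_add_distrib]
  simp only [zero_add, add_comm (1 : ℤ)]

theorem sum_Ico_two_mul_add_one_of_pairs {M : Type*} [AddCommMonoid M] {f : ℤ → M} {n : ℤ}
    (hn : 0 ≤ n) (hf : ∀ j ∈ Ico 0 n, f (2 * j) + f (2 * j + 1) = 0) :
    ∑ k ∈ Ico 0 (2 * n + 1), f k = f (2 * n) := by
  have hIco : Ico 0 (2 * n + 1) = insert (2 * n) (Ico 0 (2 * n)) := by
    ext k
    simp only [mem_Ico, mem_insert]
    omega
  rw [hIco, sum_insert (by simp), sum_Ico_two_mul, sum_eq_zero hf, add_zero]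

theorem sum_Ico_negOnePow {n : ℤ} (hn : 0 ≤ n) : ∑ k ∈ Ico 0 (2 * n + 1), ε k = 1 := by
  rw [sum_Ico_two_mul_add_one_of_pairs hn, Int.negOnePow_two_mul, Units.val_one]
  intro j _
  rw [Int.negOnePow_two_mul, Int.negOnePow_two_mul_add_one]
  rfl

theorem sum_Ico_comp_mul_emod {M : Type*} [AddCommMonoid M] (f : ℤ → M) {N c : ℤ} (hN : 0 < N)
    (hc : c * c ≡ 1 [ZMOD N]) : ∑ j ∈ Ico 0 N, f j = ∑ s ∈ Ico 0 N, f (c * s % N) := by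
  have hmaps : ∀ s, c * s % N ∈ Ico 0 N := fun s =>
    mem_Ico.2 ⟨Int.emod_nonneg _ hN.ne', Int.emod_lt_of_pos _ hN⟩
  have hinv : ∀ s ∈ Ico 0 N, c * (c * s % N) % N = s := by
    intro s hs
    rw [mem_Ico] at hs
    calc c * (c * s % N) % N = c * c * s % N := by
          rw [Int.mul_emod, Int.emod_emod, ← Int.mul_emod, mul_assoc]
      _ = 1 * s % N := hc.mul_right s
      _ = s := by rw [one_mul, Int.emod_eq_of_lt hs.1 hs.2]
  exact sum_nbij' (c * · % N) (c * · % N) (fun s _ => hmaps s) (fun s _ => hmaps s) hinv hinv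
    (fun s hs => by rw [hinv s hs])

theorem two_mul_mul_ediv_eq_ediv_two_mul {p N s : ℤ} (hN : 4 * p ^ 2 = N + 1) (hp : 0 < p)
    (hs : 0 ≤ s) (hsN : s < N) : 2 * p * s / N = s / (2 * p) := by
  set α := s / (2 * p)
  set β := s % (2 * p)
  have hs_eq : 2 * p * α + β = s := Int.mul_ediv_add_emod s (2 * p)
  have hβ0 : 0 ≤ β := Int.emod_nonneg _ (by positivity)
  have hβ : β < 2 * p := Int.emod_lt_of_pos _ (by positivity)
  have hα0 : 0 ≤ α := Int.ediv_nonneg hs (by positivity)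
  have hα : α < 2 * p := by nlinarith
  have hrem : α + 2 * p * β < N := by
    rcases le_or_gt β α with h | h <;> nlinarith
  rw [show 2 * p * s = α + 2 * p * β + α * N by rw [← hs_eq]; linear_combination α * hN,
    Int.add_mul_ediv_right _ _ (by omega), Int.ediv_eq_zero_of_lt (by positivity) hrem, zero_add]

theorem ediv_eq_ite_lt {p N a i s : ℤ} (hN : 4 * p ^ 2 = N + 1) (hp : 0 < p)
    (ha : 0 ≤ a) (hap : a < p) (hi : 0 ≤ i) (hip : i < p) (hai : a = 0 → i = 0)
    (hs : 0 ≤ s) (hsN : s < N) :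
    (N * a + 2 * p * i + p * s) / (p * N) = if s < 4 * p * (p - a) - 2 * i then 0 else 1 := by
  have hN0 : 0 < N := by nlinarith
  have key : N * a + 2 * p * i + p * s
      = p * N + p * (s - (4 * p * (p - a) - 2 * i) + 1) - a := by linear_combination (p - a) * hN
  split_ifs with h
  · refine Int.ediv_eq_zero_of_lt (by positivity) ?_
    rcases eq_or_lt_of_le ha with rfl | ha
    · rw [hai rfl]; nlinarith
    · rw [key]; nlinarith
  · have ha : 0 < a := by
      rcases eq_or_lt_of_le ha with rfl | ha
      · rw [hai rfl] at h; nlinarith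
      · exact ha
    rw [key, show p * N + p * (s - (4 * p * (p - a) - 2 * i) + 1) - a
        = p * (s - (4 * p * (p - a) - 2 * i) + 1) - a + 1 * (p * N) by ring,
      Int.add_mul_ediv_right _ _ (by positivity),
      Int.ediv_eq_zero_of_lt (by nlinarith) (by nlinarith), zero_add]

theorem negOnePow_emod_mul_negOnePow_ediv {p N : ℤ} (hN : 4 * p ^ 2 = N + 1) (hp : p ≠ 0)
    (hN0 : N ≠ 0) (m s : ℤ) :
    ε (2 * p * s % N) * ε ((m + 2 * p ^ 2 * (2 * p * s % N)) / (p * N))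
      = ε (2 * p * s / N + s) * ε ((m + p * s) / (p * N)) := by
  set e := 2 * p * s / N
  have hshift : m + 2 * p ^ 2 * (2 * p * s % N) = m + p * s + (s - 2 * p * e) * (p * N) := by
    rw [Int.emod_def]; linear_combination p * s * hN
  rw [hshift, Int.add_mul_ediv_right _ _ (mul_ne_zero hp hN0), ← Units.val_mul, ← Units.val_mul,
    ← Int.negOnePow_add, ← Int.negOnePow_add, Units.val_inj, Int.negOnePow_eq_iff, Int.emod_def]
  exact ⟨p * s - 2 * p ^ 2 * e - p * e, by linear_combination e * hN⟩

theorem negOnePow_ediv_two_mul_add_add_one (p v : ℤ) :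
    ((2 * v + 1) / (2 * p) + (2 * v + 1)).negOnePow
      = -((2 * v) / (2 * p) + 2 * v).negOnePow := by
  have hdiv : (2 * v + 1) / (2 * p) = (2 * v) / (2 * p) := by
    rw [← Int.ediv_ediv_of_nonneg zero_le_two, ← Int.ediv_ediv_of_nonneg zero_le_two]
    congr 1
    omega
  rw [hdiv, ← add_assoc, Int.negOnePow_succ]

theorem sum_negOnePow_mul_negOnePow_ediv {p N a i : ℤ} (hN : 4 * p ^ 2 = N + 1) (hp : 0 < p)
    (ha : 0 ≤ a) (hap : a < p) (hi : 0 ≤ i) (hip : i < p) (hai : a = 0 ↔ i = 0) :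
    ∑ j ∈ Ico 0 N, ε j * ε ((N * a + 2 * p * i + 2 * p ^ 2 * j) / (p * N))
      = if i = 0 then -1 else 1 := by
  have hN0 : 0 < N := by nlinarith
  obtain ⟨K, hK0, hK⟩ : ∃ K, 0 ≤ K ∧ N = 2 * K + 1 := ⟨2 * p ^ 2 - 1, by nlinarith, by linarith⟩
  set c := 4 * p * (p - a) - 2 * i
  have hc : Even c := ⟨2 * p * (p - a) - i, by ring⟩
  have hinvol : 2 * p * (2 * p) ≡ 1 [ZMOD N] := by
    rw [Int.ModEq, show 2 * p * (2 * p) = 1 + N * 1 by linear_combination hN,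
      Int.add_mul_emod_self_left]
  have hterm : ∀ s ∈ Ico 0 N,
      ε (2 * p * s % N) * ε ((N * a + 2 * p * i + 2 * p ^ 2 * (2 * p * s % N)) / (p * N))
        = ε (s / (2 * p) + s) * if s < c then 1 else -1 := by
    intro s hs
    rw [mem_Ico] at hs
    rw [negOnePow_emod_mul_negOnePow_ediv hN hp.ne' hN0.ne',
      two_mul_mul_ediv_eq_ediv_two_mul hN hp hs.1 hs.2,
      ediv_eq_ite_lt hN hp ha hap hi hip hai.1 hs.1 hs.2]
    split_ifs <;> simp
  have hpair : ∀ v ∈ Ico 0 K, ε ((2 * v) / (2 * p) + 2 * v) * (if 2 * v < c then 1 else -1)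
      + ε ((2 * v + 1) / (2 * p) + (2 * v + 1)) * (if 2 * v + 1 < c then 1 else -1) = 0 := by
    intro v _
    obtain ⟨c', hc'⟩ := hc
    have : 2 * v + 1 < c ↔ 2 * v < c := by omega
    simp only [negOnePow_ediv_two_mul_add_add_one, this, Units.val_neg]
    ring
  rw [sum_Ico_comp_mul_emod _ hN0 hinvol, sum_congr rfl hterm, hK,
    sum_Ico_two_mul_add_one_of_pairs hK0 hpair]
  have hlast : 2 * K / (2 * p) = 2 * p - 1 := by
    rw [show 2 * K = 2 * p - 2 + 2 * p * (2 * p - 1) by linear_combination -hN - hK,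
      Int.add_mul_ediv_left _ _ (by positivity), Int.ediv_eq_zero_of_lt (by omega) (by omega),
      zero_add]
  have hthreshold : 2 * K < c ↔ i = 0 := by
    constructor
    · intro h
      by_contra hi0
      have : 1 ≤ a := by omega
      nlinarith
    · intro hi0
      simp only [c, hai.2 hi0, hi0]
      nlinarith
  rw [hlast, Int.negOnePow_odd _ ⟨p + K - 1, by ring⟩]
  simp only [hthreshold]
  split_ifs <;> simp

theorem mul_add_mul_ediv_eq {p q N i j : ℤ} (hp : p ≠ 0) (hN : N ≠ 0) :
    (N * q + 2 * p) * (i + p * j) / (p * N)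
      = q * i / p + q * j + (N * (q * i % p) + 2 * p * i + 2 * p ^ 2 * j) / (p * N) := by
  rw [show (N * q + 2 * p) * (i + p * j)
      = N * (q * i % p) + 2 * p * i + 2 * p ^ 2 * j + (q * i / p + q * j) * (p * N) by
    rw [Int.emod_def]; ring, Int.add_mul_ediv_right _ _ (mul_ne_zero hp hN)]
  ring

theorem sum_negOnePow_ediv_sub_negOnePow_ediv {p q N : ℤ} (hN : 4 * p ^ 2 = N + 1) (hp : 0 < p)
    (hcop : IsCoprime p q) (hq : Odd q) :
    ∑ k ∈ Ico 0 (p * N), (ε (q * k / p) - ε ((N * q + 2 * p) * k / (p * N))) = 2 := by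
  have hN0 : 0 < N := by nlinarith
  obtain ⟨K, hK0, hK⟩ : ∃ K, 0 ≤ K ∧ N = 2 * K + 1 := ⟨2 * p ^ 2 - 1, by nlinarith, by linarith⟩
  have hrow : ∀ i ∈ Ico 0 p,
      ∑ j ∈ Ico 0 N, (ε (q * (i + p * j) / p) - ε ((N * q + 2 * p) * (i + p * j) / (p * N)))
        = if i = 0 then 2 else 0 := by
    intro i hi
    rw [mem_Ico] at hi
    have hai : q * i % p = 0 ↔ i = 0 := by
      refine ⟨fun h => Int.eq_zero_of_dvd_of_nonneg_of_lt hi.1 hi.2 ?_, fun h => by simp [h]⟩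
      exact hcop.dvd_of_dvd_mul_left (Int.dvd_of_emod_eq_zero h)
    calc _ = ∑ j ∈ Ico 0 N, ε (q * i / p) *
          (ε j - ε j * ε ((N * (q * i % p) + 2 * p * i + 2 * p ^ 2 * j) / (p * N))) := by
          refine sum_congr rfl fun j _ => ?_
          rw [mul_add_mul_ediv_eq hp.ne' hN0.ne', mul_add q, mul_left_comm q p,
            Int.add_mul_ediv_left _ _ hp.ne']
          simp only [Int.negOnePow_add, Int.negOnePow_mul_of_odd hq, Units.val_mul]
          ring
      _ = ε (q * i / p) * (1 - if i = 0 then -1 else 1) := by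
          rw [← mul_sum, sum_sub_distrib, sum_negOnePow_mul_negOnePow_ediv hN hp
            (Int.emod_nonneg _ hp.ne') (Int.emod_lt_of_pos _ hp) hi.1 hi.2 hai, hK,
            sum_Ico_negOnePow hK0]
      _ = if i = 0 then 2 else 0 := by
          split_ifs with h
          · simp [h]
          · ring
  rw [sum_Ico_mul_eq_sum_sum _ hp, sum_congr rfl hrow, sum_ite_eq' _ _ (fun _ => 2),
    if_pos (mem_Ico.2 ⟨le_rfl, hp⟩)]

theorem two_mul_card_filter_sub_card_filter {α : Type*} (s : Finset α) (f g : α → ℤ) :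
    2 * ((#{k ∈ s | Even (f k) ∧ Odd (g k)} : ℤ) - #{k ∈ s | Odd (f k) ∧ Even (g k)})
      = ∑ k ∈ s, (ε (f k) - ε (g k)) := by
  simp only [card_filter, Nat.cast_sum, Nat.cast_ite, Nat.cast_one, Nat.cast_zero,
    ← sum_sub_distrib, mul_sum]
  refine sum_congr rfl fun k _ => ?_
  rcases Int.even_or_odd (f k) with hf | hf <;> rcases Int.even_or_odd (g k) with hg | hg <;>
    simp [hf, hg, Int.negOnePow_even, Int.negOnePow_odd, Int.not_odd_iff_even.mpr,
      Int.not_even_iff_odd.mpr]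

theorem count_parity_change_general (p q P Q : ℤ) (hcop : IsCoprime p q)
    (hqodd : Odd q) (hp : 3 ≤ p)
    (hP : P = 4 * p ^ 3 - p) (hQ : Q = (4 * p ^ 2 - 1) * q + 2 * p) :
    Set.ncard {k : ℤ | 0 < k ∧ k < P ∧ Even ⌊(q : ℚ) * (k : ℚ) / (p : ℚ)⌋ ∧
        Odd ⌊(Q : ℚ) * (k : ℚ) / (P : ℚ)⌋} =
      Set.ncard {k : ℤ | 0 < k ∧ k < P ∧ Odd ⌊(q : ℚ) * (k : ℚ) / (p : ℚ)⌋ ∧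
        Even ⌊(Q : ℚ) * (k : ℚ) / (P : ℚ)⌋} + 1 := by
  have hp0 : 0 < p := by omega
  have hP' : P = p * (4 * p ^ 2 - 1) := by rw [hP]; ring
  have hP0 : 0 < P := by rw [hP']; nlinarith
  have hfloor : ∀ a b k : ℤ, 0 < b → ⌊(a : ℚ) * (k : ℚ) / (b : ℚ)⌋ = a * k / b :=
    fun a b k hb => by rw [← Int.cast_mul, floor_intCast_div_intCast hb]
  have hcard : ∀ X : ℤ → Prop, [DecidablePred X] →
      {k : ℤ | 0 < k ∧ k < P ∧ X k}.ncard = #{k ∈ Ioo 0 P | X k} := by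
    intro X _
    rw [← Set.ncard_coe_finset]
    congr 1
    ext k
    simp [and_assoc]
  have hsum : ∑ k ∈ Ioo 0 P, (ε (q * k / p) - ε (Q * k / P)) = 2 := by
    rw [← sum_negOnePow_ediv_sub_negOnePow_ediv (by ring : 4 * p ^ 2 = 4 * p ^ 2 - 1 + 1) hp0 hcop
      hqodd, ← hP', ← hQ, ← Ioo_insert_left hP0, sum_insert left_notMem_Ioo]
    simp
  simp only [hfloor q p _ hp0, hfloor Q P _ hP0, hcard]
  have := two_mul_card_filter_sub_card_filter (Ioo 0 P) (fun k => q * k / p) (fun k => Q * k / P)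
  omega

/-- Let `p` and `q` be relatively prime odd integers with `p ≥ 3` and `0 < q < p`, and set
`P = 4p³ − p` and `Q = (4p² − 1)q + 2p`. Then the number of integers `k` with `0 < k < P`
such that `⌊q·k/p⌋` is even and `⌊Q·k/P⌋` is odd exceeds by exactly one the number of
integers `k` with `0 < k < P` such that `⌊q·k/p⌋` is odd and `⌊Q·k/P⌋` is even. -/
theorem count_parity_change (p q P Q : ℤ) (hcop : IsCoprime p q) (hpodd : Odd p)
    (hqodd : Odd q) (hp : 3 ≤ p) (hq0 : 0 < q) (hqp : q < p)
    (hP : P = 4 * p ^ 3 - p) (hQ : Q = (4 * p ^ 2 - 1) * q + 2 * p) :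
    Set.ncard {k : ℤ | 0 < k ∧ k < P ∧ Even ⌊(q : ℚ) * (k : ℚ) / (p : ℚ)⌋ ∧
        Odd ⌊(Q : ℚ) * (k : ℚ) / (P : ℚ)⌋} =
      Set.ncard {k : ℤ | 0 < k ∧ k < P ∧ Odd ⌊(q : ℚ) * (k : ℚ) / (p : ℚ)⌋ ∧
        Even ⌊(Q : ℚ) * (k : ℚ) / (P : ℚ)⌋} + 1 :=
  count_parity_change_general p q P Q hcop hqodd hp hP hQ
end
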